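/- arXiv:1506.07678 — 2 statements merged into one kernel-verified Lean document; each statement's English description precedes it below -/
import Mathlib

section
/- For every n ≥ 2 and prime power q, there exists a tuple of ⌊n/2⌋ + 1 pairwise commuting matrices in M_n(F_q) whose common centralizer algebra is a commutative subalgebra of M_n(F_q) of dimension ⌊n²/4⌋ + 1. -/
/-!
Schur's algebra. Split `n = k + l` with `k = ⌈n/2⌉` and `l = ⌊n/2⌋`. The matrices `d • 1 + N`
with `N` supported in the upper right `k × l` block form a commutative algebra `V` (any two such
`N` multiply to zero) of dimension `k l + 1 = ⌊n²/4⌋ + 1`. It is the common centralizer of the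
`l + 1` matrices whose only nonzero block is the upper right one, equal to `E_{k-1,j}` (`j < l`)
or to the `k × l` matrix with ones on its main diagonal: for `X = [[P, Q], [C, T]]`, commuting
with such a matrix with upper right block `B` means `B C = 0`, `B T = P B` and `C B = 0`. The
`E_{k-1,j}` force `T = d • 1` and fix the last columns of `P` and `C`; since `k - 1 ≤ l`, the
diagonal block reaches all the other columns.
-/

theorem Nat.sub_div_two_mul_div_two (n : ℕ) : (n - n / 2) * (n / 2) = n ^ 2 / 4 := by
  obtain ⟨t, rfl | rfl⟩ := Nat.even_or_odd' n
  · rw [show 2 * t - 2 * t / 2 = t by omega, show 2 * t / 2 = t by omega,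
      show (2 * t) ^ 2 = 4 * (t * t) by ring]
    omega
  · rw [show 2 * t + 1 - (2 * t + 1) / 2 = t + 1 by omega, show (2 * t + 1) / 2 = t by omega,
      show (2 * t + 1) ^ 2 = 4 * ((t + 1) * t) + 1 by ring]
    omega

theorem Subalgebra.map_centralizer {R A B : Type*} [CommSemiring R] [Semiring A] [Semiring B]
    [Algebra R A] [Algebra R B] (φ : A ≃ₐ[R] B) (s : Set A) :
    (centralizer R s).map (φ : A →ₐ[R] B) = centralizer R (φ '' s) := by
  ext x
  simp only [mem_map, mem_centralizer_iff, Set.forall_mem_image]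
  constructor
  · rintro ⟨y, hy, rfl⟩ g hg
    simp [← map_mul, hy g hg]
  · intro hx
    refine ⟨φ.symm x, fun g hg => φ.injective ?_, by simp⟩
    simpa using hx hg

namespace Matrix

variable {R : Type*} [CommSemiring R]

section Blocks

variable {m p : Type*}

def fromUpperRight (B : Matrix m p R) : Matrix (m ⊕ p) (m ⊕ p) R := fromBlocks 0 B 0 0

theorem fromUpperRight_add (B B' : Matrix m p R) :
    fromUpperRight (B + B') = fromUpperRight B + fromUpperRight B' := by
  simp [fromUpperRight, fromBlocks_add]

theorem fromUpperRight_smul (d : R) (B : Matrix m p R) :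
    fromUpperRight (d • B) = d • fromUpperRight B := by
  simp [fromUpperRight, fromBlocks_smul]

section Mul

variable [Fintype m] [Fintype p]

theorem fromUpperRight_mul_fromUpperRight (B B' : Matrix m p R) :
    fromUpperRight B * fromUpperRight B' = 0 := by
  simp [fromUpperRight, fromBlocks_multiply]

theorem commute_fromUpperRight_fromBlocks_iff (B : Matrix m p R) (P : Matrix m m R)
    (Q : Matrix m p R) (C : Matrix p m R) (T : Matrix p p R) :
    Commute (fromUpperRight B) (fromBlocks P Q C T) ↔
      B * C = 0 ∧ B * T = P * B ∧ C * B = 0 := by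
  simp [fromUpperRight, Commute, SemiconjBy, fromBlocks_multiply, fromBlocks_inj,
    eq_comm (a := (0 : Matrix p p R))]

end Mul

variable [DecidableEq m] [DecidableEq p]

variable (R m p) in
def scalarAddUpperRight : R × Matrix m p R →ₗ[R] Matrix (m ⊕ p) (m ⊕ p) R where
  toFun dQ := dQ.1 • 1 + fromUpperRight dQ.2
  map_add' _ _ := by simp only [Prod.fst_add, Prod.snd_add, add_smul, fromUpperRight_add]; abel
  map_smul' _ _ := by simp [fromUpperRight_smul, smul_smul, smul_add]

theorem scalarAddUpperRight_apply (d : R) (Q : Matrix m p R) :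
    scalarAddUpperRight R m p (d, Q) = fromBlocks (d • 1) Q 0 (d • 1) := by
  simp [scalarAddUpperRight, fromUpperRight, ← fromBlocks_one, fromBlocks_smul, fromBlocks_add]

theorem scalarAddUpperRight_injective [Nonempty m] :
    Function.Injective (scalarAddUpperRight R m p) := by
  rintro ⟨d, Q⟩ ⟨d', Q'⟩ h
  obtain ⟨i⟩ := ‹Nonempty m›
  rw [scalarAddUpperRight_apply, scalarAddUpperRight_apply, fromBlocks_inj] at h
  simpa [h.2.1] using congrFun₂ h.1 i i

variable [Fintype m] [Fintype p]

theorem commute_of_mem_range_scalarAddUpperRight {X Y : Matrix (m ⊕ p) (m ⊕ p) R}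
    (hX : X ∈ LinearMap.range (scalarAddUpperRight R m p))
    (hY : Y ∈ LinearMap.range (scalarAddUpperRight R m p)) : Commute X Y := by
  obtain ⟨⟨d, Q⟩, rfl⟩ := hX
  obtain ⟨⟨d', Q'⟩, rfl⟩ := hY
  refine ((Commute.one_left _).smul_left d).add_left ?_
  refine ((Commute.one_right _).smul_right d').add_right ?_
  simp [Commute, SemiconjBy, fromUpperRight_mul_fromUpperRight]

theorem finrank_range_scalarAddUpperRight {K : Type*} [Field K] [Nonempty m] :
    Module.finrank K (LinearMap.range (scalarAddUpperRight K m p)) =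
      Fintype.card m * Fintype.card p + 1 := by
  rw [LinearMap.finrank_range_of_inj scalarAddUpperRight_injective, Module.finrank_prod,
    Module.finrank_self, Module.finrank_matrix, Module.finrank_self, mul_one, add_comm]

end Blocks

section Generators

variable (R) in
def rectOne (m l : ℕ) : Matrix (Fin m) (Fin l) R := of fun i j => if (i : ℕ) = j then 1 else 0

theorem mul_rectOne_apply {k : Type*} {m l : ℕ} (M : Matrix k (Fin m) R) (a : k) {c : Fin m}
    {j : Fin l} (h : (c : ℕ) = j) : (M * rectOne R m l) a j = M a c := by
  rw [mul_apply, Finset.sum_eq_single c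
    (fun b _ hb => by simp [rectOne, ← h, Fin.val_ne_of_ne hb]) (by simp)]
  simp [rectOne, h]

variable {m l : ℕ}

theorem eq_zero_of_mul_rectOne_eq_zero {k : Type*} (hl : 0 < l) (hml : m ≤ l)
    {C : Matrix k (Fin (m + 1)) R} (hS : C * rectOne R (m + 1) l = 0)
    (hE : ∀ j : Fin l, C * single (Fin.last m) j (1 : R) = 0) : C = 0 := by
  ext a c
  rcases Fin.eq_castSucc_or_eq_last c with ⟨c, rfl⟩ | rfl
  · have hc : (c : ℕ) < l := by omega
    simpa [mul_rectOne_apply C a (c := c.castSucc) (j := ⟨c, hc⟩) rfl] using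
      congrFun₂ hS a ⟨c, hc⟩
  · simpa using congrFun₂ (hE ⟨0, hl⟩) a ⟨0, hl⟩

theorem eq_smul_one_of_single_mul_eq {P : Matrix (Fin (m + 1)) (Fin (m + 1)) R}
    {T : Matrix (Fin l) (Fin l) R}
    (hE : ∀ j : Fin l, single (Fin.last m) j (1 : R) * T = P * single (Fin.last m) j (1 : R)) :
    T = P (Fin.last m) (Fin.last m) • (1 : Matrix (Fin l) (Fin l) R) := by
  ext j c
  have := congrFun₂ (hE j) (Fin.last m) c
  rcases eq_or_ne c j with rfl | hcj
  · simpa using this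
  · simpa [hcj, hcj.symm] using this

theorem eq_smul_one_of_rectOne_mul_eq (hl : 0 < l) (hml : m ≤ l)
    {P : Matrix (Fin (m + 1)) (Fin (m + 1)) R} {d : R}
    (hS : rectOne R (m + 1) l * (d • 1 : Matrix (Fin l) (Fin l) R) = P * rectOne R (m + 1) l)
    (hE : ∀ j : Fin l, single (Fin.last m) j (1 : R) * (d • 1 : Matrix (Fin l) (Fin l) R) =
      P * single (Fin.last m) j (1 : R)) :
    P = d • 1 := by
  ext a c
  rcases Fin.eq_castSucc_or_eq_last c with ⟨c, rfl⟩ | rfl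
  · have hc : (c : ℕ) < l := by omega
    have := congrFun₂ hS a ⟨c, hc⟩
    rw [mul_rectOne_apply P a (c := c.castSucc) (j := ⟨c, hc⟩) rfl, smul_one_eq_diagonal,
      mul_diagonal] at this
    simpa [rectOne, one_apply, Fin.ext_iff, eq_comm] using this
  · have := congrFun₂ (hE ⟨0, hl⟩) a ⟨0, hl⟩
    rcases eq_or_ne a (Fin.last m) with rfl | ha
    · simpa using this.symm
    · simpa [ha] using this.symm

variable (R m l) in
def schurGenerators : Fin (l + 1) → Matrix (Fin (m + 1) ⊕ Fin l) (Fin (m + 1) ⊕ Fin l) R :=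
  Fin.cons (fromUpperRight (rectOne R (m + 1) l)) fun j =>
    fromUpperRight (single (Fin.last m) j 1)

theorem schurGenerators_mul_schurGenerators (i j : Fin (l + 1)) :
    schurGenerators R m l i * schurGenerators R m l j = 0 := by
  cases i using Fin.cases <;> cases j using Fin.cases <;>
    exact fromUpperRight_mul_fromUpperRight _ _

theorem commute_schurGenerators (i j : Fin (l + 1)) :
    Commute (schurGenerators R m l i) (schurGenerators R m l j) :=
  (schurGenerators_mul_schurGenerators i j).trans
    (schurGenerators_mul_schurGenerators j i).symm

theorem centralizer_range_schurGenerators (hl : 0 < l) (hml : m ≤ l) :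
    Subalgebra.toSubmodule (Subalgebra.centralizer R (Set.range (schurGenerators R m l))) =
      LinearMap.range (scalarAddUpperRight R (Fin (m + 1)) (Fin l)) := by
  ext X
  obtain ⟨P, Q, C, T, rfl⟩ : ∃ P Q C T, X = fromBlocks P Q C T :=
    ⟨_, _, _, _, (fromBlocks_toBlocks X).symm⟩
  simp only [Subalgebra.mem_toSubmodule, Subalgebra.mem_centralizer_iff, schurGenerators,
    Fin.range_cons, Set.forall_mem_insert, Set.forall_mem_range, ← commute_iff_eq,
    commute_fromUpperRight_fromBlocks_iff, LinearMap.mem_range, Prod.exists,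
    scalarAddUpperRight_apply, fromBlocks_inj]
  constructor
  · rintro ⟨⟨-, hST, hCS⟩, hE⟩
    obtain rfl := eq_smul_one_of_single_mul_eq fun j => (hE j).2.1
    exact ⟨_, Q, (eq_smul_one_of_rectOne_mul_eq hl hml hST fun j => (hE j).2.1).symm, rfl,
      (eq_zero_of_mul_rectOne_eq_zero hl hml hCS fun j => (hE j).2.2).symm, rfl⟩
  · rintro ⟨d, Q, rfl, rfl, rfl, rfl⟩
    simp

end Generators

end Matrix

theorem stmt7_general (n : ℕ) (hn : 2 ≤ n) (F : Type) [Field F] :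
    ∃ A : Fin (n / 2 + 1) → Matrix (Fin n) (Fin n) F,
      (∀ i j, Commute (A i) (A j)) ∧
      (∀ x ∈ Subalgebra.centralizer F (Set.range A),
        ∀ y ∈ Subalgebra.centralizer F (Set.range A), x * y = y * x) ∧
      Module.finrank F (Subalgebra.centralizer F (Set.range A) :
        Subalgebra F (Matrix (Fin n) (Fin n) F)) = n ^ 2 / 4 + 1 := by
  obtain ⟨m, hm⟩ : ∃ m, n - n / 2 = m + 1 := ⟨n - n / 2 - 1, by omega⟩
  let φ := Matrix.reindexAlgEquiv F F (finSumFinEquiv.trans (finCongr (by omega)) :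
    Fin (m + 1) ⊕ Fin (n / 2) ≃ Fin n)
  have hV := Matrix.centralizer_range_schurGenerators (R := F) (m := m) (l := n / 2) (by omega)
    (by omega)
  refine ⟨φ ∘ Matrix.schurGenerators F m (n / 2),
    fun i j => (Matrix.commute_schurGenerators i j).map φ, ?_, ?_⟩ <;>
    rw [Set.range_comp, ← Subalgebra.map_centralizer]
  · intro _ hφx _ hφy
    obtain ⟨x, hx, rfl⟩ := Subalgebra.mem_map.1 hφx
    obtain ⟨y, hy, rfl⟩ := Subalgebra.mem_map.1 hφy
    rw [← Subalgebra.mem_toSubmodule, hV] at hx hy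
    exact ((Matrix.commute_of_mem_range_scalarAddUpperRight hx hy).map φ).eq
  · rw [← (φ.subalgebraMap _).toLinearEquiv.finrank_eq, ← Subalgebra.finrank_toSubmodule, hV,
      Matrix.finrank_range_scalarAddUpperRight, Fintype.card_fin, Fintype.card_fin, ← hm,
      Nat.sub_div_two_mul_div_two]

/-- For every `n ≥ 2`, there is a tuple of `⌊n/2⌋ + 1` pairwise commuting
matrices in `M_n(F_q)` whose common centralizer is a commutative subalgebra of
dimension `⌊n²/4⌋ + 1`. -/
theorem stmt7 (n q : ℕ) (hn : 2 ≤ n) (F : Type) [Field F] [Fintype F]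
    (hF : Fintype.card F = q) :
    ∃ A : Fin (n / 2 + 1) → Matrix (Fin n) (Fin n) F,
      (∀ i j, Commute (A i) (A j)) ∧
      (∀ x ∈ Subalgebra.centralizer F (Set.range A),
        ∀ y ∈ Subalgebra.centralizer F (Set.range A), x * y = y * x) ∧
      Module.finrank F (Subalgebra.centralizer F (Set.range A) :
        Subalgebra F (Matrix (Fin n) (Fin n) F)) = n ^ 2 / 4 + 1 :=
  stmt7_general n hn F
end

section
/- Fix n ≥ 1 and a prime power q, and let m(n) = ⌊n²/4⌋ + 1. Let c(n,k,q) denote the number of orbits of GL_n(F_q) acting by simultaneous conjugation on the set of k-tuples of pairwise commuting matrices in M_n(F_q). Then there exists a constant C₁ > 0 (depending on n and q but not k) such that c(n,k,q) ≥ C₁ · q^{m(n)k} for all sufficiently large k. -/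
/-!
For `n = r + s` with `r = ⌊n/2⌋`, `s = ⌈n/2⌉`, the block matrices `[[a • 1, B], [0, a • 1]]`
(`a` a scalar, `B` an `r × s` matrix) form a commutative algebra of dimension
`r s + 1 = ⌊n²/4⌋ + 1`, so it yields `q ^ ((⌊n²/4⌋ + 1) k)` commuting `k`-tuples. An orbit of
simultaneous conjugation has at most `|GL_n(F_q)|` elements, hence
`c(n,k,q) ≥ q ^ ((⌊n²/4⌋ + 1) k) / |GL_n(F_q)|`.
-/

open Matrix

theorem Nat.div_two_mul_sub_div_two (n : ℕ) : n / 2 * (n - n / 2) = n ^ 2 / 4 := by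
  obtain ⟨m, rfl | rfl⟩ := Nat.even_or_odd' n
  · rw [show 2 * m / 2 = m by omega, show 2 * m - m = m by omega,
      show (2 * m) ^ 2 = m * m * 4 by ring, Nat.mul_div_cancel _ four_pos]
  · rw [show (2 * m + 1) / 2 = m by omega, show 2 * m + 1 - m = m + 1 by omega,
      show (2 * m + 1) ^ 2 = 1 + m * (m + 1) * 4 by ring, Nat.add_mul_div_right _ _ four_pos]
    omega

theorem Commute.units_conj {M : Type*} [Monoid M] {a b : M} (h : Commute a b) (g : Mˣ) :
    Commute (g * a * ↑g⁻¹) (g * b * ↑g⁻¹) := by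
  simp only [Commute, SemiconjBy, mul_assoc, Units.inv_mul_cancel_left]
  rw [← mul_assoc a, h.eq, mul_assoc]

theorem Nat.card_le_card_quot_mul_card {α G : Type*} [Finite α] [Finite G]
    {r : α → α → Prop} (hr : Equivalence r) (f : G → α → α)
    (hf : ∀ a b, r a b → ∃ g, b = f g a) :
    Nat.card α ≤ Nat.card (Quot r) * Nat.card G := by
  rw [← Nat.card_prod]
  refine Nat.card_le_card_of_surjective (fun p => f p.2 p.1.out) fun a => ?_
  have hrep : r (Quot.mk r a).out a := hr.eqvGen_iff.mp (Quot.eqvGen_exact (Quot.out_eq _))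
  obtain ⟨g, hg⟩ := hf _ _ hrep
  exact ⟨(Quot.mk r a, g), hg.symm⟩

namespace Matrix

variable {m o R : Type*} [DecidableEq m] [DecidableEq o]

def scalarCorner [Semiring R] (a : R) (B : Matrix m o R) : Matrix (m ⊕ o) (m ⊕ o) R :=
  fromBlocks (a • 1) B 0 (a • 1)

theorem scalarCorner_inj [Semiring R] [Nonempty o] {a a' : R} {B B' : Matrix m o R} :
    scalarCorner a B = scalarCorner a' B' ↔ a = a' ∧ B = B' := by
  refine ⟨fun h => ⟨?_, congrArg toBlocks₁₂ h⟩, fun ⟨rfl, rfl⟩ => rfl⟩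
  obtain ⟨i⟩ := ‹Nonempty o›
  simpa [scalarCorner] using congrFun₂ (congrArg toBlocks₂₂ h) i i

variable [Fintype m] [Fintype o] [CommSemiring R]

theorem scalarCorner_mul (a a' : R) (B B' : Matrix m o R) :
    scalarCorner a B * scalarCorner a' B' = scalarCorner (a * a') (a • B' + a' • B) := by
  simp [scalarCorner, fromBlocks_multiply, smul_smul, add_comm, mul_comm a a']

theorem commute_scalarCorner (a a' : R) (B B' : Matrix m o R) :
    Commute (scalarCorner a B) (scalarCorner a' B') := by
  rw [Commute, SemiconjBy, scalarCorner_mul, scalarCorner_mul, mul_comm a, add_comm]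

end Matrix

theorem card_pow_le_card_commuting_tuples {β A : Type*} [Mul A] [Finite A] (v : β → A)
    (hv : Function.Injective v) (hcomm : ∀ x y, Commute (v x) (v y)) (ι : Type*) [Finite ι] :
    Nat.card β ^ Nat.card ι ≤ Nat.card {T : ι → A // ∀ i j, Commute (T i) (T j)} := by
  rw [← Nat.card_fun]
  exact Nat.card_le_card_of_injective (fun t => ⟨v ∘ t, fun i j => hcomm _ _⟩)
    fun t t' h => funext fun i => hv (congrFun (congrArg Subtype.val h) i)

section SimultaneousConjugation

variable {ι M : Type*} [Monoid M]

def IsSimultConj (A B : ι → M) : Prop :=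
  ∃ g : Mˣ, ∀ i, B i = g * A i * ↑g⁻¹

theorem isSimultConj_equivalence : Equivalence (IsSimultConj (ι := ι) (M := M)) where
  refl _ := ⟨1, fun _ => by simp⟩
  symm := fun ⟨g, hg⟩ => ⟨g⁻¹, fun i => by simp [hg i, mul_assoc]⟩
  trans := fun ⟨g, hg⟩ ⟨g', hg'⟩ => ⟨g' * g, fun i => by simp [hg i, hg' i, mul_assoc]⟩

theorem card_commuting_le_card_quot_mul_card_units [Finite ι] [Finite M] :
    Nat.card {T : ι → M // ∀ i j, Commute (T i) (T j)} ≤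
      Nat.card (Quot fun A B : {T : ι → M // ∀ i j, Commute (T i) (T j)} =>
        IsSimultConj A.val B.val) * Nat.card Mˣ :=
  Nat.card_le_card_quot_mul_card (isSimultConj_equivalence.comap Subtype.val)
    (fun g A => ⟨fun i => g * A.val i * ((g⁻¹ : Mˣ) : M), fun i j => (A.prop i j).units_conj g⟩)
    fun _ _ ⟨g, hg⟩ => ⟨g, Subtype.ext (funext hg)⟩

end SimultaneousConjugation

theorem pow_le_card_commuting_matrix_tuples {n : ℕ} (hn : 1 ≤ n) (R : Type*) [CommRing R]
    [Finite R] (ι : Type*) [Finite ι] :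
    Nat.card R ^ ((n ^ 2 / 4 + 1) * Nat.card ι) ≤
      Nat.card {T : ι → Matrix (Fin n) (Fin n) R // ∀ i j, Commute (T i) (T j)} := by
  have : Nonempty (Fin (n - n / 2)) := ⟨⟨0, by omega⟩⟩
  let e := reindexAlgEquiv R R
    (finSumFinEquiv.trans (finCongr (Nat.add_sub_of_le (n.div_le_self 2))))
  have hcard : Nat.card (R × Matrix (Fin (n / 2)) (Fin (n - n / 2)) R) =
      Nat.card R ^ (n ^ 2 / 4 + 1) := by
    rw [Nat.card_prod, Matrix, Nat.card_fun, Nat.card_fun, Nat.card_fin, Nat.card_fin, ← pow_mul,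
      mul_comm (n - n / 2), Nat.div_two_mul_sub_div_two, pow_succ' (Nat.card R)]
  rw [pow_mul, ← hcard]
  exact card_pow_le_card_commuting_tuples (fun p => e (scalarCorner p.1 p.2))
    (fun _ _ h => Prod.ext_iff.mpr (scalarCorner_inj.mp (e.injective h)))
    (fun _ _ => (commute_scalarCorner _ _ _ _).map e) ι

/-- Lower asymptotic bound: with `m(n) = ⌊n²/4⌋ + 1`, the number `c(n,k,q)` of
simultaneous similarity classes of `k`-tuples of pairwise commuting `n × n`
matrices over `F_q` satisfies `c(n,k,q) ≥ C₁ q^(m(n) k)` for large `k`. -/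
theorem stmt15 (n q : ℕ) (hn : 1 ≤ n) (F : Type) [Field F] [Fintype F]
    (hF : Fintype.card F = q) :
    ∃ C₁ : ℝ, 0 < C₁ ∧ ∃ K : ℕ, ∀ k : ℕ, K ≤ k →
      C₁ * (q : ℝ) ^ ((n ^ 2 / 4 + 1) * k) ≤
      (Nat.card (Quot (fun A B :
          {T : Fin k → Matrix (Fin n) (Fin n) F // ∀ i j, Commute (T i) (T j)} =>
        ∃ g : GL (Fin n) F, ∀ i, B.val i =
          (g : Matrix (Fin n) (Fin n) F) * A.val i *
            ((g⁻¹ : GL (Fin n) F) : Matrix (Fin n) (Fin n) F))) : ℝ) := by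
  have hGL : 0 < Nat.card (GL (Fin n) F) := Nat.card_pos
  refine ⟨(Nat.card (GL (Fin n) F) : ℝ)⁻¹, by positivity, 0, fun k _ => ?_⟩
  have hbound := (pow_le_card_commuting_matrix_tuples hn F (Fin k)).trans
    card_commuting_le_card_quot_mul_card_units
  rw [Nat.card_eq_fintype_card (α := F), hF, Nat.card_fin] at hbound
  rw [inv_mul_le_iff₀ (by exact_mod_cast hGL)]
  exact_mod_cast hbound.trans_eq (mul_comm _ _)
end
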